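/- For all integers n ≥ k ≥ 1, N(n,k) = ∑_{j=1}^{k} C(n-j, k-j) · (-1)^{k-j} · w(n,j), where N(n,k) is the Narayana number. -/

import Mathlib

/-!
Since `C(n,j)·C(n-j,k-j) = C(n,k)·C(k,j)`, Vandermonde's identity gives
`∑_{j=1}^k C(n-j,k-j)·n·N(n,j) = C(n,k)·C(n+k,k-1) = n·w(n,k)`. So `w(n,·)` is the image of
`N(n,·)` under the unitriangular matrix `(C(n-j,k-j))_{k,j}`, whose inverse is
`((-1)^(k-j)·C(n-j,k-j))_{k,j}`: the product of the two collapses, via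
`C(n-i,j-i)·C(n-j,k-j) = C(n-i,k-i)·C(k-i,j-i)`, to `C(n-i,k-i)·(1-1)^(k-i)`.
-/

/-- `w(n,j) = C(n-1,j-1)·C(n+j,j) − C(n,j)·C(n+j,j-1)`. -/
def w (n j : ℕ) : ℤ :=
  ((n - 1).choose (j - 1) * (n + j).choose j : ℤ) - (n.choose j * (n + j).choose (j - 1) : ℤ)

/-- The Narayana number `N(n,k) = (1/n)·C(n,k)·C(n,k-1)`. -/
def narayana (n k : ℕ) : ℚ := ((n.choose k * n.choose (k - 1) : ℕ) : ℚ) / n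

open Finset

section BinomialInversion

variable {R : Type*} [CommRing R]

theorem sum_range_choose_mul_choose_sub_mul_neg_one_pow (m d : ℕ) :
    ∑ a ∈ range (d + 1), (m.choose a * (m - a).choose (d - a) : R) * (-1) ^ (d - a)
      = if d = 0 then 1 else 0 := by
  calc ∑ a ∈ range (d + 1), (m.choose a * (m - a).choose (d - a) : R) * (-1) ^ (d - a)
      = m.choose d * ∑ a ∈ range (d + 1), (1 : R) ^ a * (-1) ^ (d - a) * d.choose a := by
        rw [mul_sum]
        refine sum_congr rfl fun a ha => ?_
        rw [← Nat.cast_mul, ← Nat.choose_mul (Nat.lt_succ_iff.mp (mem_range.mp ha))]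
        push_cast
        ring
    _ = if d = 0 then 1 else 0 := by
        rw [← add_pow, add_neg_cancel, zero_pow_eq]
        split_ifs with h <;> simp [h]

theorem sum_Icc_choose_mul_neg_one_pow_mul_choose {i k : ℕ} (hik : i ≤ k) (n : ℕ) :
    ∑ j ∈ Icc i k, ((n - j).choose (k - j) : R) * (-1) ^ (k - j) * (n - i).choose (j - i)
      = if i = k then 1 else 0 := by
  rw [← Ico_add_one_right_eq_Icc, sum_Ico_eq_sum_range, show k + 1 - i = k - i + 1 by omega]
  convert sum_range_choose_mul_choose_sub_mul_neg_one_pow (R := R) (n - i) (k - i) using 2 with a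
  · rw [Nat.sub_add_eq, Nat.sub_add_eq, Nat.add_sub_cancel_left]
    ring
  · omega

theorem sum_Icc_choose_inversion {l k : ℕ} (hlk : l ≤ k) (n : ℕ) {f g : ℕ → R}
    (hf : ∀ j ∈ Icc l k, f j = ∑ i ∈ Icc l j, ((n - i).choose (j - i) : R) * g i) :
    g k = ∑ j ∈ Icc l k, ((n - j).choose (k - j) : R) * (-1) ^ (k - j) * f j := by
  calc g k = ∑ i ∈ Icc l k, g i * if i = k then 1 else 0 := by simp [hlk]
    _ = ∑ i ∈ Icc l k, ∑ j ∈ Icc i k,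
          ((n - j).choose (k - j) : R) * (-1) ^ (k - j) * ((n - i).choose (j - i) * g i) := by
        refine sum_congr rfl fun i hi => ?_
        rw [← sum_Icc_choose_mul_neg_one_pow_mul_choose (mem_Icc.mp hi).2 n, mul_sum]
        exact sum_congr rfl fun j _ => by ring
    _ = ∑ j ∈ Icc l k, ∑ i ∈ Icc l j,
          ((n - j).choose (k - j) : R) * (-1) ^ (k - j) * ((n - i).choose (j - i) * g i) :=
        sum_comm' fun i j => by simp only [mem_Icc]; omega
    _ = ∑ j ∈ Icc l k, ((n - j).choose (k - j) : R) * (-1) ^ (k - j) * f j := by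
        refine sum_congr rfl fun j hj => ?_
        rw [hf j hj, mul_sum]

end BinomialInversion

theorem Nat.sum_Icc_choose_mul_choose_sub_one {k : ℕ} (hk : 1 ≤ k) (n : ℕ) :
    ∑ j ∈ Icc 1 k, k.choose j * n.choose (j - 1) = (k + n).choose (k - 1) := by
  rw [Nat.add_choose_eq]
  refine sum_nbij' (fun j => (k - j, j - 1)) (fun p => p.2 + 1) ?_ ?_ ?_ ?_
    fun j hj => by rw [Nat.choose_symm (mem_Icc.mp hj).2]
  all_goals
    simp only [mem_Icc, HasAntidiagonal.mem_antidiagonal, Prod.forall, Prod.mk.injEq]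
    omega

theorem Nat.sum_Icc_choose_sub_mul_choose_mul_choose_sub_one {k : ℕ} (hk : 1 ≤ k) (n : ℕ) :
    ∑ j ∈ Icc 1 k, (n - j).choose (k - j) * (n.choose j * n.choose (j - 1))
      = n.choose k * (k + n).choose (k - 1) := by
  rw [← Nat.sum_Icc_choose_mul_choose_sub_one hk, mul_sum]
  refine sum_congr rfl fun j hj => ?_
  rw [← mul_assoc, ← mul_assoc, Nat.choose_mul (mem_Icc.mp hj).2]
  ring

theorem natCast_mul_w {k : ℕ} (hk : 1 ≤ k) (n : ℕ) :
    n * w n k = n.choose k * (n + k).choose (k - 1) := by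
  obtain ⟨k, rfl⟩ := Nat.exists_eq_add_of_le' hk
  have h₁ : (n : ℤ) * (n - 1).choose k = n.choose (k + 1) * (k + 1) := by
    rcases n with _ | m
    · simp
    · exact_mod_cast Nat.add_one_mul_choose_eq m k
  have h₂ : ((n + (k + 1)).choose (k + 1) : ℤ) * (k + 1) = (n + (k + 1)).choose k * (n + 1) := by
    have := Nat.choose_succ_right_eq (n + (k + 1)) k
    rw [show n + (k + 1) - k = n + 1 by omega] at this
    exact_mod_cast this
  simp only [w, Nat.add_sub_cancel]
  linear_combination ((n + (k + 1)).choose (k + 1) : ℤ) * h₁ + (n.choose (k + 1) : ℤ) * h₂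

theorem w_eq_sum_Icc_choose_mul_narayana {n k : ℕ} (hn : n ≠ 0) (hk : 1 ≤ k) :
    (w n k : ℚ) = ∑ j ∈ Icc 1 k, ((n - j).choose (k - j) : ℚ) * narayana n j := by
  have hw := congrArg (Int.cast : ℤ → ℚ) (natCast_mul_w hk n)
  push_cast at hw
  calc (w n k : ℚ) = (n.choose k * (k + n).choose (k - 1) : ℕ) / n := by
        rw [eq_div_iff (by exact_mod_cast hn), mul_comm, hw, add_comm]
        push_cast
        ring
    _ = (∑ j ∈ Icc 1 k, (n - j).choose (k - j) * (n.choose j * n.choose (j - 1)) : ℕ) / n := by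
        rw [Nat.sum_Icc_choose_sub_mul_choose_mul_choose_sub_one hk]
    _ = ∑ j ∈ Icc 1 k, ((n - j).choose (k - j) : ℚ) * narayana n j := by
        rw [Nat.cast_sum, sum_div]
        refine sum_congr rfl fun j _ => ?_
        rw [narayana, Nat.cast_mul, mul_div_assoc]

/-- For `n ≥ k ≥ 1`, `N(n,k) = ∑_{j=1}^{k} C(n-j,k-j)·(-1)^{k-j}·w(n,j)`. -/
theorem narayana_eq_sum_w (n k : ℕ) (hk : 1 ≤ k) (hkn : k ≤ n) :
    narayana n k
      = ∑ j ∈ Finset.Icc 1 k, ((n - j).choose (k - j) : ℚ) * (-1 : ℚ) ^ (k - j) * (w n j : ℚ) := by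
  refine sum_Icc_choose_inversion hk n fun j hj => ?_
  exact w_eq_sum_Icc_choose_mul_narayana (by omega) (mem_Icc.mp hj).1
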